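/- Fix α₀ < α₁ < ⋯ < α_T = 1 in (0, 1]. Suppose a sequence of estimators satisfies ‖θ̂_t − θ*‖ ≤ c (‖θ̂_{t−1} − θ*‖² + r_t) for all t = 1, …, T, where r_t = √(p/K^{α_t}), c ≥ 1 is a constant, and ‖θ̂₀ − θ*‖ ≤ √(p/K^{α₀}). If p K^{α_t} / K^{2α_{t−1}} ≤ 1/(4c²)² for every t, then ‖θ̂_T − θ*‖ ≤ 2c √(p/K). -/

import Mathlib

/-!
Write `r t = √(p / K^{α t})`. By induction, `e t ≤ 2c r t`: the growth condition on the exponents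
says exactly that `(2c r_{t-1})² ≤ r_t`, so the quadratic term inherited from stage `t - 1` is at
most the fresh statistical error `r_t`, and `e t ≤ c (r_t + r_t)`. At `t = T` we have `α T = 1`.
-/

open Real

theorem le_two_mul_of_le_mul_sq_add {c : ℝ} {e r : ℕ → ℝ} {T : ℕ} (hc : 0 ≤ c)
    (he : ∀ t, 0 ≤ e t) (h0 : e 0 ≤ 2 * c * r 0)
    (hrec : ∀ t < T, e (t + 1) ≤ c * (e t ^ 2 + r (t + 1)))
    (hr : ∀ t < T, (2 * c * r t) ^ 2 ≤ r (t + 1)) :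
    ∀ t ≤ T, e t ≤ 2 * c * r t := by
  intro t
  induction t with
  | zero => exact fun _ ↦ h0
  | succ t ih =>
    intro ht
    have hsq : e t ^ 2 ≤ (2 * c * r t) ^ 2 := pow_le_pow_left₀ (he t) (ih (by omega)) 2
    calc e (t + 1) ≤ c * (e t ^ 2 + r (t + 1)) := hrec t ht
      _ ≤ c * (r (t + 1) + r (t + 1)) := by gcongr; exact hsq.trans (hr t ht)
      _ = 2 * c * r (t + 1) := by ring

theorem sq_two_mul_sqrt_div_rpow_le {p K c a b : ℝ} (hp : 0 ≤ p) (hK : 0 < K) (hc : 0 < c)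
    (h : p * K ^ b / K ^ (2 * a) ≤ (1 / (4 * c ^ 2)) ^ 2) :
    (2 * c * √(p / K ^ a)) ^ 2 ≤ √(p / K ^ b) := by
  have hA : 0 < K ^ a := rpow_pos_of_pos hK a
  have hB : 0 < K ^ b := rpow_pos_of_pos hK b
  rw [mul_comm 2 a, rpow_mul hK.le, rpow_two, div_le_iff₀ (by positivity)] at h
  rw [mul_pow, sq_sqrt (by positivity), le_sqrt (by positivity) (by positivity),
    le_div_iff₀ hB]
  have h' : 16 * c ^ 4 * (p * K ^ b) ≤ (K ^ a) ^ 2 := by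
    field_simp at h; nlinarith
  field_simp
  nlinarith [mul_le_mul_of_nonneg_left h' hp]

theorem stmt13_general (T : ℕ) (α : ℕ → ℝ)
    (hαT : α T = 1)
    (p K c : ℝ) (hp : 0 < p) (hK : 1 < K) (hc : 1 ≤ c)
    (e : ℕ → ℝ) (he : ∀ t, 0 ≤ e t)
    (he0 : e 0 ≤ Real.sqrt (p / K ^ (α 0)))
    (hrec : ∀ t, 1 ≤ t → t ≤ T →
      e t ≤ c * ((e (t - 1)) ^ 2 + Real.sqrt (p / K ^ (α t))))
    (hcond : ∀ t, 1 ≤ t → t ≤ T →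
      p * K ^ (α t) / K ^ (2 * α (t - 1)) ≤ (1 / (4 * c ^ 2)) ^ 2) :
    e T ≤ 2 * c * Real.sqrt (p / K) := by
  have hbound := le_two_mul_of_le_mul_sq_add (r := fun t ↦ √(p / K ^ α t)) (T := T)
    (by linarith) he
    (he0.trans (le_mul_of_one_le_left (sqrt_nonneg _) (by linarith)))
    (fun t ht ↦ hrec (t + 1) (by omega) ht)
    (fun t ht ↦ sq_two_mul_sqrt_div_rpow_le hp.le (by linarith) (by linarith)
      (hcond (t + 1) (by omega) ht))
    T le_rfl
  simpa [hαT] using hbound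

/-- The deterministic recursion driving the multi-stage Newton iteration: if each stage
incurs error at most `c(previous error² + √(p/K^{α_t}))` and the exponents grow fast enough,
the final error is at most `2c√(p/K)`. -/
theorem stmt13 (T : ℕ) (hT : 0 < T) (α : ℕ → ℝ)
    (hαmono : ∀ t < T, α t < α (t + 1))
    (hα0 : 0 < α 0) (hα1 : ∀ t ≤ T, α t ≤ 1) (hαT : α T = 1)
    (p K c : ℝ) (hp : 0 < p) (hK : 1 < K) (hc : 1 ≤ c)
    (e : ℕ → ℝ) (he : ∀ t, 0 ≤ e t)
    (he0 : e 0 ≤ Real.sqrt (p / K ^ (α 0)))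
    (hrec : ∀ t, 1 ≤ t → t ≤ T →
      e t ≤ c * ((e (t - 1)) ^ 2 + Real.sqrt (p / K ^ (α t))))
    (hcond : ∀ t, 1 ≤ t → t ≤ T →
      p * K ^ (α t) / K ^ (2 * α (t - 1)) ≤ (1 / (4 * c ^ 2)) ^ 2) :
    e T ≤ 2 * c * Real.sqrt (p / K) :=
  stmt13_general T α hαT p K c hp hK hc e he he0 hrec hcond
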